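/- For 0 < u ≤ f with u ≤ f/l and 1/l ≤ f ≤ 1 (l ≥ 2), one has (e^{f+ku} − e^{(k+1)u})/(e^{fk} − e^{ku}) = (e^f − 1)/(e^{fk} − 1) + O(f/l); moreover (e^f − 1)/(e^{fk} − 1) ≤ (e − 1)/(e^k − 1) for f ≤ 1 and k ≥ 2. -/

import Mathlib

/-!
Write `h x = expRatio k x = (eˣ - 1) / (e^{xk} - 1)`. Since `1 / h x` is the slope of the convex function
`z ↦ z ^ k` between `1` and `eˣ`, `h` is antitone on `(0, ∞)`; this is the second claim.
For the first, the quotient factors as `eᵘ · h (f - u)`, so its distance to `h f` is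
`(eᵘ - 1) h (f - u) + (h (f - u) - h f)`. The first term is `O(u)` because `0 ≤ h ≤ 1`; the
second is nonnegative by antitonicity and `O(u)` by first-order bounds on the exponentials,
whose leading terms cancel. Finally `u ≤ f / l`.
-/

open Real Set

lemma exp_sub_one_le_mul_exp (x : ℝ) : exp x - 1 ≤ x * exp x := by
  have h := add_one_le_exp (-x)
  have hmul : exp x * exp (-x) = 1 := by rw [← exp_add, add_neg_cancel, exp_zero]
  nlinarith [exp_pos x]

noncomputable def expRatio (k x : ℝ) : ℝ := (exp x - 1) / (exp (x * k) - 1)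

section expRatio

variable {k x u : ℝ}

lemma expRatio_nonneg (hk : 0 ≤ k) (hx : 0 ≤ x) : 0 ≤ expRatio k x :=
  div_nonneg (by linarith [add_one_le_exp x])
    (by linarith [add_one_le_exp (x * k), mul_nonneg hx hk])

lemma expRatio_le_one (hk : 1 ≤ k) (hx : 0 ≤ x) : expRatio k x ≤ 1 :=
  div_le_one_of_le₀ (by gcongr; nlinarith)
    (by linarith [add_one_le_exp (x * k), mul_nonneg hx (zero_le_one.trans hk)])

lemma expRatio_antitoneOn (hk : 1 ≤ k) : AntitoneOn (expRatio k) (Ioi 0) := by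
  intro x hx y hy hxy
  have inv_slope (z : ℝ) : expRatio k z = ((exp z ^ k - 1 ^ k) / (exp z - 1))⁻¹ := by
    rw [expRatio, inv_div, one_rpow, exp_mul]
  have hx1 : 1 < exp x := one_lt_exp_iff.2 hx
  have hslope_pos : 0 < (exp x ^ k - 1 ^ k) / (exp x - 1) :=
    div_pos (by rw [one_rpow, sub_pos]; exact one_lt_rpow hx1 (by linarith)) (by linarith)
  rw [inv_slope y, inv_slope x]
  exact inv_anti₀ hslope_pos <| (convexOn_rpow hk).secant_mono (mem_Ici.2 zero_le_one)
    (mem_Ici.2 (exp_pos x).le) (mem_Ici.2 (exp_pos y).le) hx1.ne' (one_lt_exp_iff.2 hy).ne'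
    (exp_le_exp.2 hxy)

lemma div_exp_sub_exp_eq_exp_mul_expRatio (k f u : ℝ) :
    (exp (f + k * u) - exp ((k + 1) * u)) / (exp (f * k) - exp (k * u)) =
      exp u * expRatio k (f - u) := by
  have hnum : exp (f + k * u) - exp ((k + 1) * u) =
      exp (k * u) * (exp u * (exp (f - u) - 1)) := by
    simp only [mul_sub, ← exp_add, mul_one]; ring_nf
  have hden : exp (f * k) - exp (k * u) = exp (k * u) * (exp ((f - u) * k) - 1) := by
    simp only [mul_sub, ← exp_add, mul_one]; ring_nf
  rw [hnum, hden, mul_div_mul_left _ _ (exp_pos _).ne', expRatio, mul_div_assoc]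

-- The first-order terms `x · ku` and `kx · u` of the two products cancel.
lemma exp_sub_one_mul_sub_exp_sub_one_mul_le (hk : 1 ≤ k) (hx : 0 < x) (hu : 0 ≤ u)
    (hux : u ≤ x) :
    (exp x - 1) * (exp (k * u) - 1) - (exp (x * k) - 1) * (exp u - 1) ≤
      2 * u * exp (x + k * u) * (k * x) ^ 2 := by
  have h1 : (exp x - 1) * (exp (k * u) - 1) ≤ x * exp x * (k * u * exp (k * u)) :=
    mul_le_mul (exp_sub_one_le_mul_exp x) (exp_sub_one_le_mul_exp _)
      (sub_nonneg.2 (one_le_exp (mul_nonneg (zero_le_one.trans hk) hu))) (by positivity)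
  have h2 : k * x * u ≤ (exp (x * k) - 1) * (exp u - 1) :=
    mul_le_mul (by linarith [add_one_le_exp (x * k)]) (by linarith [add_one_le_exp u]) hu
      (by linarith [add_one_le_exp (x * k), mul_pos hx (zero_lt_one.trans_le hk)])
  have h3 := exp_sub_one_le_mul_exp (x + k * u)
  calc (exp x - 1) * (exp (k * u) - 1) - (exp (x * k) - 1) * (exp u - 1)
      ≤ k * x * u * (exp (x + k * u) - 1) := by rw [exp_add]; nlinarith
    _ ≤ k * x * u * ((2 * k * x) * exp (x + k * u)) := by
      gcongr; exact h3.trans (by gcongr; nlinarith)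
    _ = 2 * u * exp (x + k * u) * (k * x) ^ 2 := by ring

lemma expRatio_sub_expRatio_add_le (hk : 1 ≤ k) (hx : 0 < x) (hu : 0 ≤ u) (hux : u ≤ x) :
    expRatio k x - expRatio k (x + u) ≤ (k + 2) * exp (x + k * u) * u := by
  have hlin := exp_sub_one_mul_sub_exp_sub_one_mul_le hk hx hu hux
  unfold expRatio
  have hA' : exp (x + u) - 1 = exp u * exp x - 1 := by rw [exp_add, mul_comm]
  have hB' : exp ((x + u) * k) - 1 = exp (k * u) * exp (x * k) - 1 := by
    rw [← exp_add]; ring_nf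
  rw [hA', hB']
  set A := exp x - 1
  set B := exp (x * k) - 1
  set a := exp u
  set b := exp (k * u)
  set E := exp (x + k * u)
  set B' := b * exp (x * k) - 1
  have hkx : k * x ≤ B := by linarith [add_one_le_exp (x * k)]
  have hAB : A ≤ B := sub_le_sub_right (exp_le_exp.2 (by nlinarith)) 1
  have hBB' : B ≤ B' := by nlinarith [exp_pos (x * k), one_le_exp (by positivity : 0 ≤ k * u)]
  have hB : 0 < B := lt_of_lt_of_le (by positivity) hkx
  have hsq : (k * x) ^ 2 ≤ B * B' :=
    (pow_two (k * x)).trans_le (mul_le_mul hkx (hkx.trans hBB') (by positivity) hB.le)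
  have hquad : A * B * (b - a) ≤ k * u * E * (B * B') := by
    have hbE : k * u * b ≤ k * u * E :=
      mul_le_mul_of_nonneg_left (exp_le_exp.2 (by linarith)) (by positivity)
    have hba : b - a ≤ k * u * E := by
      linarith [exp_sub_one_le_mul_exp (k * u), one_le_exp hu]
    calc A * B * (b - a) ≤ A * B * (k * u * E) :=
          mul_le_mul_of_nonneg_left hba (mul_nonneg (by linarith [add_one_le_exp x]) hB.le)
      _ ≤ B' * B * (k * u * E) :=
        mul_le_mul_of_nonneg_right (mul_le_mul_of_nonneg_right (hAB.trans hBB') hB.le)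
          (by positivity)
      _ = k * u * E * (B * B') := by ring
  have hnum : A * B' - B * (a * exp x - 1) =
      A * B * (b - a) + (A * (b - 1) - B * (a - 1)) := by
    simp only [B']; ring
  have hlin' : 2 * u * E * (k * x) ^ 2 ≤ 2 * u * E * (B * B') := by gcongr
  have hB'pos : 0 < B' := hB.trans_le hBB'
  rw [div_sub_div _ _ hB.ne' hB'pos.ne', div_le_iff₀ (mul_pos hB hB'pos), hnum]
  linarith

lemma abs_exp_mul_expRatio_sub_expRatio_add_le (hk : 1 ≤ k) (hu : 0 < u) (hux : u ≤ x)
    (hxu : x + u ≤ 1) :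
    |exp u * expRatio k x - expRatio k (x + u)| ≤ (k + 3) * exp (k + 1) * u := by
  have hx : 0 < x := hu.trans_le hux
  have hh0 := expRatio_nonneg (zero_le_one.trans hk) hx.le
  have hh1 := expRatio_le_one hk hx.le
  have hmono : expRatio k (x + u) ≤ expRatio k x :=
    expRatio_antitoneOn hk hx (mem_Ioi.2 (by linarith)) (by linarith)
  have hexp_u : exp u - 1 ≤ exp (k + 1) * u := by
    have := exp_le_exp.2 (show u ≤ k + 1 by linarith)
    nlinarith [exp_sub_one_le_mul_exp u]
  have hexp_xku : exp (x + k * u) ≤ exp (k + 1) := exp_le_exp.2 (by nlinarith)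
  have hdiff := expRatio_sub_expRatio_add_le hk hx hu.le hux
  rw [abs_le]
  constructor
  · nlinarith [one_le_exp hu.le]
  · calc exp u * expRatio k x - expRatio k (x + u)
        = (exp u - 1) * expRatio k x + (expRatio k x - expRatio k (x + u)) := by ring
      _ ≤ exp (k + 1) * u * 1 + (k + 2) * exp (k + 1) * u := by
        gcongr
        exact hdiff.trans (by gcongr)
      _ = (k + 3) * exp (k + 1) * u := by ring

end expRatio

/-- For k ≥ 2 there is a constant C such that for 0 < u ≤ f, u ≤ f/l, 1/l ≤ f ≤ 1, l ≥ 2: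
(e^{f+ku} − e^{(k+1)u})/(e^{fk} − e^{ku}) = (e^f − 1)/(e^{fk} − 1) + O(f/l);
moreover (e^f − 1)/(e^{fk} − 1) ≥ (e − 1)/(e^k − 1) for 0 < f ≤ 1. -/
theorem stmt_19 (k : ℝ) (hk : 2 ≤ k) :
    (∃ C : ℝ, 0 < C ∧ ∀ (l : ℕ) (f u : ℝ), 2 ≤ l → 0 < u → u ≤ f → u ≤ f / (l : ℝ) →
      1 / (l : ℝ) ≤ f → f ≤ 1 →
      |(Real.exp (f + k * u) - Real.exp ((k + 1) * u)) /
          (Real.exp (f * k) - Real.exp (k * u)) -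
        (Real.exp f - 1) / (Real.exp (f * k) - 1)| ≤ C * (f / (l : ℝ))) ∧
    (∀ f : ℝ, 0 < f → f ≤ 1 →
      (Real.exp 1 - 1) / (Real.exp k - 1) ≤ (Real.exp f - 1) / (Real.exp (f * k) - 1)) := by
  have hk1 : 1 ≤ k := by linarith
  refine ⟨⟨(k + 3) * exp (k + 1), by positivity, fun l f u hl hu huf hul _ hf1 => ?_⟩,
    fun f hf hf1 => ?_⟩
  · have hl : (2 : ℝ) ≤ l := by exact_mod_cast hl
    have hu2 : u ≤ f / 2 := hul.trans (div_le_div_of_nonneg_left (hu.le.trans huf) two_pos hl)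
    have key := abs_exp_mul_expRatio_sub_expRatio_add_le hk1 hu (x := f - u) (by linarith)
      (by linarith)
    rw [sub_add_cancel, ← div_exp_sub_exp_eq_exp_mul_expRatio] at key
    exact key.trans (by gcongr)
  · simpa only [expRatio, one_mul] using expRatio_antitoneOn hk1 hf (mem_Ioi.2 one_pos) hf1
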